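/- Let S be a symmetric complex n×n matrix and H a positive definite Hermitian n×n matrix, let Λ_Φ = {(x, (2/i)(Sx + conj(Hx))) : x ∈ ℂⁿ} ⊂ ℂ^{2n}, let Φ(x) = Re((Sx)·x) + Σ_{j,k} H_{jk} x_k conj(x_j), and let ι be the unique conjugate-linear map on ℂ^{2n} restricting to the identity on Λ_Φ. A complex Lagrangian plane Λ ⊆ ℂ^{2n} is Λ_Φ-positive, i.e. (1/i)σ(ρ, ι(ρ)) > 0 for all nonzero ρ ∈ Λ, if and only if there exists a symmetric complex n×n matrix S̃ such that Λ = {(x, (2/i)S̃x) : x ∈ ℂⁿ} and the real quadratic form x ↦ Φ(x) − Re((S̃x)·x) is positive definite on ℂⁿ. -/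

import Mathlib

/-!
Write every point of `ℂ²ⁿ` as `(y, (2/i)(Sy + conj(Hz)))`. Then `Λ_Φ` is the diagonal `z = y`,
and `ι`, being conjugate-linear and the identity on `Λ_Φ`, swaps `y` and `z`; a direct computation
gives `(1/i)σ(ρ, ιρ) = 2(⟨Hy, y⟩ - ⟨Hz, z⟩)`. A positive `Λ` therefore contains no vector
`(0, η) ≠ 0`, so by counting dimensions it is the graph of a linear map, which is symmetric because
`Λ` is Lagrangian: `Λ = {(x, (2/i)S̃x)}`. On this graph `z = H⁻¹ conj(Bx)` with `B = S̃ - S`, so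
positivity of `Λ` says that the conjugate-linear map `T x = H⁻¹ conj(Bx)`, symmetric for the inner
product `⟨x, y⟩_H`, is a strict contraction. For such maps this is equivalent to
`Re ⟨x, Tx⟩_H < ‖x‖²_H`, i.e. `Re(Bx·x) < ⟨Hx, x⟩`, which is the positivity of `Φ - Re(S̃x·x)`:
one direction is Cauchy–Schwarz, the other combines a phase rotation (under `x ↦ cx` the form
`⟨x, Tx⟩` is multiplied by `conj(c)²`) with polarization at `v = Tx`.
-/

open Matrix

/-- The standard complex symplectic form `σ((x,ξ),(y,η)) = ξ·y − η·x` on `ℂ^{2n}`. -/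
noncomputable def sigmaC (n : ℕ) (X Y : (Fin n → ℂ) × (Fin n → ℂ)) : ℂ :=
  ∑ j, X.2 j * Y.1 j - ∑ j, Y.2 j * X.1 j

open scoped InnerProductSpace ComplexConjugate ComplexOrder

section ConjLinear

variable {E : Type*} [NormedAddCommGroup E] [InnerProductSpace ℂ E] (T : E →ₗ⋆[ℂ] E)

lemma inner_smul_apply_smul (c : ℂ) (u : E) :
    ⟪c • u, T (c • u)⟫_ℂ = conj c ^ 2 * ⟪u, T u⟫_ℂ := by
  rw [T.map_smulₛₗ, inner_smul_left, inner_smul_right]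
  ring

lemma norm_inner_apply_lt_of_forall_re_inner_apply_lt
    (hT : ∀ u ≠ 0, (⟪u, T u⟫_ℂ).re < ‖u‖ ^ 2) {u : E} (hu : u ≠ 0) :
    ‖⟪u, T u⟫_ℂ‖ < ‖u‖ ^ 2 := by
  set c := Complex.exp ((Complex.arg ⟪u, T u⟫_ℂ / 2 : ℝ) * Complex.I)
  have hc : ‖c‖ = 1 := Complex.norm_exp_ofReal_mul_I _
  have hcc : conj c * c = 1 := by rw [Complex.conj_mul', hc]; simp
  -- rotating `u` by a square root of the phase of `⟪u, T u⟫` makes it real and nonnegative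
  have hq : ⟪u, T u⟫_ℂ = ‖⟪u, T u⟫_ℂ‖ * c ^ 2 := by
    rw [← Complex.exp_nat_mul]
    push_cast
    ring_nf
    exact (Complex.norm_mul_exp_arg_mul_I _).symm
  have hrot : ⟪c • u, T (c • u)⟫_ℂ = ‖⟪u, T u⟫_ℂ‖ := by
    rw [inner_smul_apply_smul]
    conv_lhs => rw [hq]
    linear_combination (‖⟪u, T u⟫_ℂ‖ : ℂ) * (conj c * c + 1) * hcc
  have := hT (c • u) (smul_ne_zero (norm_ne_zero_iff.mp (by simp [hc])) hu)
  rwa [hrot, Complex.ofReal_re, norm_smul, hc, one_mul] at this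

variable {T}

lemma inner_add_apply_add_sub_inner_sub_apply_sub (hT : ∀ u v, ⟪u, T v⟫_ℂ = ⟪v, T u⟫_ℂ)
    (u v : E) :
    ⟪u + v, T (u + v)⟫_ℂ - ⟪u - v, T (u - v)⟫_ℂ = 4 * ⟪v, T u⟫_ℂ := by
  simp only [map_add, map_sub, inner_add_left, inner_add_right, inner_sub_left, inner_sub_right,
    hT u v]
  ring

theorem forall_re_inner_apply_apply_lt_iff (hT : ∀ u v, ⟪u, T v⟫_ℂ = ⟪v, T u⟫_ℂ) :
    (∀ u ≠ 0, (⟪T u, T u⟫_ℂ).re < (⟪u, u⟫_ℂ).re) ↔ ∀ u ≠ 0, (⟪u, T u⟫_ℂ).re < (⟪u, u⟫_ℂ).re := by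
  have hsq (w : E) : (⟪w, w⟫_ℂ).re = ‖w‖ ^ 2 := inner_self_eq_norm_sq (𝕜 := ℂ) w
  simp only [hsq]
  constructor
  · intro h u hu
    have hTu : ‖T u‖ < ‖u‖ := lt_of_pow_lt_pow_left₀ 2 (norm_nonneg u) (h u hu)
    calc (⟪u, T u⟫_ℂ).re ≤ ‖u‖ * ‖T u‖ := re_inner_le_norm (𝕜 := ℂ) u (T u)
      _ < ‖u‖ * ‖u‖ := mul_lt_mul_of_pos_left hTu (norm_pos_iff.mpr hu)
      _ = ‖u‖ ^ 2 := (sq _).symm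
  · intro h u hu
    have hle : ∀ w : E, ‖⟪w, T w⟫_ℂ‖ ≤ ‖w‖ ^ 2 := fun w => by
      rcases eq_or_ne w 0 with rfl | hw
      · simp
      · exact (norm_inner_apply_lt_of_forall_re_inner_apply_lt T h hw).le
    -- polarization at `v = T u`
    have hpolar : 4 * ‖T u‖ ^ 2 ≤ ‖⟪u + T u, T (u + T u)⟫_ℂ‖ + ‖⟪u - T u, T (u - T u)⟫_ℂ‖ := by
      calc 4 * ‖T u‖ ^ 2 = ‖4 * ⟪T u, T u⟫_ℂ‖ := by
            rw [inner_self_eq_norm_sq_to_K]; norm_cast; simp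
        _ = _ := by rw [inner_add_apply_add_sub_inner_sub_apply_sub hT]
        _ ≤ _ := norm_sub_le _ _
    have hlt : ‖⟪u + T u, T (u + T u)⟫_ℂ‖ + ‖⟪u - T u, T (u - T u)⟫_ℂ‖
        < ‖u + T u‖ ^ 2 + ‖u - T u‖ ^ 2 := by
      by_cases hp : u + T u = 0
      · have hm : u - T u ≠ 0 := by
          rw [eq_neg_of_add_eq_zero_right hp, sub_neg_eq_add, ← two_smul ℂ]
          exact smul_ne_zero two_ne_zero hu
        exact add_lt_add_of_le_of_lt (hle _)
          (norm_inner_apply_lt_of_forall_re_inner_apply_lt T h hm)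
      · exact add_lt_add_of_lt_of_le
          (norm_inner_apply_lt_of_forall_re_inner_apply_lt T h hp) (hle _)
    nlinarith [parallelogram_law_with_norm ℂ u (T u)]

end ConjLinear

namespace Matrix

variable {ι : Type*} [Fintype ι]

lemma transpose_eq_self_iff_mulVec_dotProduct_comm {R : Type*} [CommSemiring R] [DecidableEq ι]
    {M : Matrix ι ι R} : Mᵀ = M ↔ ∀ a b, M *ᵥ a ⬝ᵥ b = M *ᵥ b ⬝ᵥ a := by
  refine ⟨fun hM a b => ?_, fun h => ?_⟩
  · rw [dotProduct_comm, dotProduct_mulVec, ← mulVec_transpose, hM]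
  · ext i j
    simpa [mulVec_single_one, dotProduct_single_one] using h (Pi.single i 1) (Pi.single j 1)

lemma mulVec_inv_mulVec_of_isUnit {α : Type*} [CommRing α] [DecidableEq ι] {A : Matrix ι ι α}
    (hA : IsUnit A) (v : ι → α) : A *ᵥ (A⁻¹ *ᵥ v) = v := by
  rw [mulVec_mulVec, mul_nonsing_inv _ ((isUnit_iff_isUnit_det A).mp hA), one_mulVec]

theorem PosDef.forall_re_dotProduct_inv_mulVec_star_lt_iff [DecidableEq ι] {H B : Matrix ι ι ℂ}
    (hH : H.PosDef) (hB : Bᵀ = B) :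
    (∀ x ≠ 0, (star (H⁻¹ *ᵥ star (B *ᵥ x)) ⬝ᵥ (H *ᵥ (H⁻¹ *ᵥ star (B *ᵥ x)))).re
        < (star x ⬝ᵥ (H *ᵥ x)).re) ↔
      ∀ x ≠ 0, (B *ᵥ x ⬝ᵥ x).re < (star x ⬝ᵥ (H *ᵥ x)).re := by
  let _ := H.toNormedAddCommGroup hH
  let _ := H.toInnerProductSpace hH.posSemidef
  have hinner (u v : ι → ℂ) : ⟪u, v⟫_ℂ = star u ⬝ᵥ (H *ᵥ v) := dotProduct_comm _ _
  let T : (ι → ℂ) →ₗ⋆[ℂ] (ι → ℂ) :=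
    { toFun x := H⁻¹ *ᵥ star (B *ᵥ x)
      map_add' x y := by simp only [mulVec_add, star_add]
      map_smul' c x := by simp only [mulVec_smul, star_smul, starRingEnd_apply] }
  have hT (u v : ι → ℂ) : ⟪u, T v⟫_ℂ = star (B *ᵥ v ⬝ᵥ u) := by
    rw [hinner, ← star_dotProduct_star]
    exact congrArg (star u ⬝ᵥ ·) (mulVec_inv_mulVec_of_isUnit hH.isUnit _)
  have hTsymm (u v : ι → ℂ) : ⟪u, T v⟫_ℂ = ⟪v, T u⟫_ℂ := by
    rw [hT, hT, transpose_eq_self_iff_mulVec_dotProduct_comm.mp hB]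
  have hre (u : ι → ℂ) : (⟪u, T u⟫_ℂ).re = (B *ᵥ u ⬝ᵥ u).re := by
    rw [hT, Complex.star_def, Complex.conj_re]
  have hTapply (u : ι → ℂ) : T u = H⁻¹ *ᵥ star (B *ᵥ u) := rfl
  have key := forall_re_inner_apply_apply_lt_iff hTsymm
  simp only [hre] at key
  simpa only [hinner, hTapply] using key

end Matrix

lemma sigmaC_eq_sub_dotProduct {n : ℕ} (X Y : (Fin n → ℂ) × (Fin n → ℂ)) :
    sigmaC n X Y = X.2 ⬝ᵥ Y.1 - Y.2 ⬝ᵥ X.1 :=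
  rfl

section PhiPair

variable {n : ℕ} (S H : Matrix (Fin n) (Fin n) ℂ)

noncomputable def phiPair (y z : Fin n → ℂ) : (Fin n → ℂ) × (Fin n → ℂ) :=
  (y, (2 / Complex.I) • (S *ᵥ y + star (H *ᵥ z)))

lemma phiPair_add_smul (c : ℂ) (u w : Fin n → ℂ) :
    phiPair S H u u + c • phiPair S H w w = phiPair S H (u + c • w) (u + conj c • w) := by
  simp only [phiPair, Prod.smul_mk, Prod.mk_add_mk, mulVec_add, mulVec_smul, star_add, star_smul,
    Complex.star_def, Complex.conj_conj, smul_add, smul_comm c (2 / Complex.I)]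
  congr 1
  abel

lemma mk_eq_phiPair {y η z : Fin n → ℂ} (hz : star (H *ᵥ z) = (Complex.I / 2) • η - S *ᵥ y) :
    (y, η) = phiPair S H y z := by
  rw [phiPair, hz, add_sub_cancel, smul_smul, div_mul_div_cancel₀ Complex.I_ne_zero,
    div_self two_ne_zero, one_smul]

variable {S H}

lemma apply_phiPair
    (ι : ((Fin n → ℂ) × (Fin n → ℂ)) →ₛₗ[starRingEnd ℂ] ((Fin n → ℂ) × (Fin n → ℂ)))
    (hι : ∀ x, ι (phiPair S H x x) = phiPair S H x x) (y z : Fin n → ℂ) :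
    ι (phiPair S H y z) = phiPair S H z y := by
  set u : Fin n → ℂ := (1 / 2 : ℂ) • (y + z)
  set w : Fin n → ℂ := (-Complex.I / 2) • (y - z)
  have hI : Complex.I * (-Complex.I / 2) = 1 / 2 := by
    linear_combination (-1 / 2 : ℂ) * Complex.I_sq
  have hy : u + Complex.I • w = y := by
    rw [smul_smul, hI]
    module
  have hz : u + conj Complex.I • w = z := by
    rw [smul_smul, Complex.conj_I, neg_mul, hI]
    module
  calc ι (phiPair S H y z) = ι (phiPair S H u u + Complex.I • phiPair S H w w) := by
        rw [phiPair_add_smul, hy, hz]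
    _ = phiPair S H u u + conj Complex.I • phiPair S H w w := by
        rw [map_add, map_smulₛₗ, hι, hι]
    _ = phiPair S H z y := by rw [phiPair_add_smul, Complex.conj_conj, hy, hz]

lemma one_div_I_mul_sigmaC_phiPair (hS : Sᵀ = S) (y z : Fin n → ℂ) :
    1 / Complex.I * sigmaC n (phiPair S H y z) (phiPair S H z y)
      = 2 * (star (H *ᵥ y) ⬝ᵥ y - star (H *ᵥ z) ⬝ᵥ z) := by
  rw [sigmaC_eq_sub_dotProduct, phiPair, phiPair]
  simp only [smul_dotProduct, add_dotProduct, smul_eq_mul,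
    transpose_eq_self_iff_mulVec_dotProduct_comm.mp hS y z]
  field_simp
  linear_combination (star (H *ᵥ z) ⬝ᵥ z - star (H *ᵥ y) ⬝ᵥ y) * Complex.I_sq

lemma zero_lt_one_div_I_mul_sigmaC_phiPair_iff (hS : Sᵀ = S) (hH : H.IsHermitian)
    (y z : Fin n → ℂ) :
    0 < 1 / Complex.I * sigmaC n (phiPair S H y z) (phiPair S H z y)
      ↔ (star z ⬝ᵥ (H *ᵥ z)).re < (star y ⬝ᵥ (H *ᵥ y)).re := by
  have hform (v : Fin n → ℂ) : star (H *ᵥ v) ⬝ᵥ v = star v ⬝ᵥ (H *ᵥ v) := by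
    rw [star_mulVec, ← dotProduct_mulVec, hH.eq]
  have him (v : Fin n → ℂ) : (star v ⬝ᵥ (H *ᵥ v)).im = 0 := hH.im_star_dotProduct_mulVec_self v
  rw [one_div_I_mul_sigmaC_phiPair hS, hform, hform, Complex.lt_def]
  simp [Complex.mul_re, Complex.mul_im, him]

end PhiPair

section Positivity

variable {n : ℕ} {S H : Matrix (Fin n) (Fin n) ℂ}
  {ι : ((Fin n → ℂ) × (Fin n → ℂ)) →ₛₗ[starRingEnd ℂ] ((Fin n → ℂ) × (Fin n → ℂ))}

lemma not_zero_lt_one_div_I_mul_sigmaC_zero_mk (hS : Sᵀ = S) (hH : H.PosDef)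
    (hι : ∀ x, ι (phiPair S H x x) = phiPair S H x x) (η : Fin n → ℂ) :
    ¬ 0 < 1 / Complex.I * sigmaC n (0, η) (ι (0, η)) := by
  rw [mk_eq_phiPair S H (z := H⁻¹ *ᵥ star ((Complex.I / 2) • η))
      (by rw [mulVec_inv_mulVec_of_isUnit hH.isUnit, star_star, mulVec_zero, sub_zero]),
    apply_phiPair ι hι, zero_lt_one_div_I_mul_sigmaC_phiPair_iff hS hH.isHermitian]
  simp only [star_zero, zero_dotProduct, Complex.zero_re, not_lt]
  exact hH.posSemidef.re_dotProduct_nonneg _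

theorem forall_zero_lt_one_div_I_mul_sigmaC_iff_of_eq_graph (hS : Sᵀ = S) (hH : H.PosDef)
    (hι : ∀ x, ι (phiPair S H x x) = phiPair S H x x) {St : Matrix (Fin n) (Fin n) ℂ}
    (hSt : Stᵀ = St) {Λ : Set ((Fin n → ℂ) × (Fin n → ℂ))}
    (hΛ : Λ = {p | p.2 = (2 / Complex.I) • (St *ᵥ p.1)}) :
    (∀ ρ ∈ Λ, ρ ≠ 0 → 0 < 1 / Complex.I * sigmaC n ρ (ι ρ)) ↔
      ∀ x ≠ 0, ((St - S) *ᵥ x ⬝ᵥ x).re < (star x ⬝ᵥ (H *ᵥ x)).re := by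
  have hgraph : (∀ ρ ∈ Λ, ρ ≠ 0 → 0 < 1 / Complex.I * sigmaC n ρ (ι ρ)) ↔
      ∀ x ≠ 0, 0 < 1 / Complex.I * sigmaC n (x, (2 / Complex.I) • (St *ᵥ x))
        (ι (x, (2 / Complex.I) • (St *ᵥ x))) := by
    constructor
    · intro h x hx
      exact h _ (by rw [hΛ]; rfl) (by simp [hx])
    · rintro h ⟨x, η⟩ hρ hρ0
      rw [hΛ] at hρ
      obtain rfl : η = (2 / Complex.I) • (St *ᵥ x) := hρ
      exact h x (by rintro rfl; simp at hρ0)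
  have hpt (x : Fin n → ℂ) : (x, (2 / Complex.I) • (St *ᵥ x))
      = phiPair S H x (H⁻¹ *ᵥ star ((St - S) *ᵥ x)) := by
    refine mk_eq_phiPair S H ?_
    rw [mulVec_inv_mulVec_of_isUnit hH.isUnit, star_star, smul_smul,
      show Complex.I / 2 * (2 / Complex.I) = 1 by field_simp, one_smul, sub_mulVec]
  simp only [hgraph, hpt, apply_phiPair ι hι,
    zero_lt_one_div_I_mul_sigmaC_phiPair_iff hS hH.isHermitian]
  exact hH.forall_re_dotProduct_inv_mulVec_star_lt_iff (by rw [transpose_sub, hSt, hS])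

end Positivity

theorem Submodule.exists_eq_graph_of_finrank_eq {K V W : Type*} [Field K] [AddCommGroup V]
    [Module K V] [FiniteDimensional K V] [AddCommGroup W] [Module K W] (Λ : Submodule K (V × W))
    (hdim : Module.finrank K Λ = Module.finrank K V) (hvert : ∀ w, ((0 : V), w) ∈ Λ → w = 0) :
    ∃ f : V →ₗ[K] W, Λ = f.graph := by
  set proj : Λ →ₗ[K] V := LinearMap.fst K V W ∘ₗ Λ.subtype
  have hinj : Function.Injective proj := by
    rw [← LinearMap.ker_eq_bot, Submodule.eq_bot_iff]
    rintro ⟨⟨v, w⟩, hp⟩ (rfl : v = 0)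
    simp [hvert w hp]
  have : FiniteDimensional K Λ := Module.Finite.of_injective proj hinj
  have hsurj : Function.Surjective proj :=
    (LinearMap.injective_iff_surjective_of_finrank_eq_finrank hdim).mp hinj
  set e := LinearEquiv.ofBijective proj ⟨hinj, hsurj⟩
  refine ⟨LinearMap.snd K V W ∘ₗ Λ.subtype ∘ₗ e.symm.toLinearMap, ?_⟩
  ext p
  have hfst : ((e.symm p.1 : Λ) : V × W).1 = p.1 := e.apply_symm_apply p.1
  rw [LinearMap.mem_graph_iff]
  constructor
  · intro hp
    have hsub : ((0 : V), p.2 - ((e.symm p.1 : Λ) : V × W).2) ∈ Λ := by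
      convert Λ.sub_mem hp (e.symm p.1).2 using 1
      ext <;> simp [hfst]
    exact sub_eq_zero.mp (hvert _ hsub)
  · intro hp
    convert (e.symm p.1).2
    exact Prod.ext hfst.symm hp

theorem exists_transpose_eq_and_eq_graph_of_isLagrangian {n : ℕ}
    (Λ : Submodule ℂ ((Fin n → ℂ) × (Fin n → ℂ))) (hdim : Module.finrank ℂ Λ = n)
    (hlag : ∀ X ∈ Λ, ∀ Y ∈ Λ, sigmaC n X Y = 0) (hvert : ∀ η, ((0 : Fin n → ℂ), η) ∈ Λ → η = 0) :
    ∃ M : Matrix (Fin n) (Fin n) ℂ,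
      Mᵀ = M ∧ (Λ : Set ((Fin n → ℂ) × (Fin n → ℂ))) = {p | p.2 = M *ᵥ p.1} := by
  obtain ⟨f, rfl⟩ := Λ.exists_eq_graph_of_finrank_eq (by simpa using hdim) hvert
  refine ⟨LinearMap.toMatrix' f, transpose_eq_self_iff_mulVec_dotProduct_comm.mpr fun a b => ?_, ?_⟩
  · have := hlag (a, f a) ((f.mem_graph_iff _).mpr rfl) (b, f b) ((f.mem_graph_iff _).mpr rfl)
    rw [sigmaC_eq_sub_dotProduct, sub_eq_zero] at this
    simpa only [LinearMap.toMatrix'_mulVec] using this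
  · ext p
    simp [LinearMap.mem_graph_iff, LinearMap.toMatrix'_mulVec]

lemma sum_sum_mul_conj_eq_star_dotProduct_mulVec {n : ℕ} (H : Matrix (Fin n) (Fin n) ℂ)
    (x : Fin n → ℂ) : ∑ j, ∑ k, H j k * x k * conj (x j) = star x ⬝ᵥ (H *ᵥ x) := by
  simp only [dotProduct, mulVec, Finset.mul_sum, Pi.star_apply, Complex.star_def]
  exact Fintype.sum_congr _ _ fun j => Fintype.sum_congr _ _ fun k => by ring

open ComplexOrder in
/-- with `S` symmetric, `H` positive definite Hermitian,
`Φ(x) = Re((Sx)·x) + ∑ H_{jk} x_k conj(x_j)`, `Λ_Φ` its graph Lagrangian and `ι` the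
conjugate-linear map fixing `Λ_Φ`, a complex Lagrangian plane `Λ` is `Λ_Φ`-positive iff
`Λ = {(x, (2/i)S̃x)}` for a symmetric `S̃` with `Φ(x) − Re((S̃x)·x)` positive definite. -/
theorem stmt_15 (n : ℕ) (S H : Matrix (Fin n) (Fin n) ℂ)
    (hS : Sᵀ = S) (hH : H.PosDef)
    (Φ : (Fin n → ℂ) → ℝ)
    (hΦ : ∀ x, Φ x = ((S *ᵥ x) ⬝ᵥ x).re +
      (∑ j, ∑ k, H j k * x k * starRingEnd ℂ (x j)).re)
    (L : Set ((Fin n → ℂ) × (Fin n → ℂ)))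
    (hL : L = {p | p.2 =
      (2 / Complex.I) • (S *ᵥ p.1 + fun j => starRingEnd ℂ ((H *ᵥ p.1) j))})
    (ι : ((Fin n → ℂ) × (Fin n → ℂ)) →ₛₗ[starRingEnd ℂ] ((Fin n → ℂ) × (Fin n → ℂ)))
    (hι : ∀ p ∈ L, ι p = p)
    (Λ : Submodule ℂ ((Fin n → ℂ) × (Fin n → ℂ)))
    (hΛdim : Module.finrank ℂ Λ = n)
    (hΛlag : ∀ X ∈ Λ, ∀ Y ∈ Λ, sigmaC n X Y = 0) :
    (∀ ρ ∈ Λ, ρ ≠ 0 → 0 < 1 / Complex.I * sigmaC n ρ (ι ρ)) ↔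
      ∃ St : Matrix (Fin n) (Fin n) ℂ, Stᵀ = St ∧
        (Λ : Set ((Fin n → ℂ) × (Fin n → ℂ)))
          = {p | p.2 = (2 / Complex.I) • (St *ᵥ p.1)} ∧
        ∀ x : Fin n → ℂ, x ≠ 0 → 0 < Φ x - ((St *ᵥ x) ⬝ᵥ x).re := by
  have hιΛΦ (x : Fin n → ℂ) : ι (phiPair S H x x) = phiPair S H x x := hι _ (by rw [hL]; rfl)
  have hΦSt (St : Matrix (Fin n) (Fin n) ℂ) (x : Fin n → ℂ) :
      0 < Φ x - (St *ᵥ x ⬝ᵥ x).re ↔ ((St - S) *ᵥ x ⬝ᵥ x).re < (star x ⬝ᵥ (H *ᵥ x)).re := by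
    rw [hΦ, sum_sum_mul_conj_eq_star_dotProduct_mulVec, sub_mulVec, sub_dotProduct, Complex.sub_re]
    constructor <;> intro h <;> linarith
  simp only [hΦSt]
  constructor
  · intro hpos
    obtain ⟨M, hM, hΛM⟩ := exists_transpose_eq_and_eq_graph_of_isLagrangian Λ hΛdim hΛlag
      fun η hη => by_contra fun hη0 => not_zero_lt_one_div_I_mul_sigmaC_zero_mk hS hH hιΛΦ η
        (hpos _ hη (by simpa using hη0))
    have hMSt : ((Complex.I / 2) • M)ᵀ = (Complex.I / 2) • M := by rw [transpose_smul, hM]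
    have hΛSt : (Λ : Set ((Fin n → ℂ) × (Fin n → ℂ)))
        = {p | p.2 = (2 / Complex.I) • (((Complex.I / 2) • M) *ᵥ p.1)} := by
      simp only [hΛM, smul_mulVec, smul_smul,
        show 2 / Complex.I * (Complex.I / 2) = 1 by field_simp, one_smul]
    exact ⟨_, hMSt, hΛSt,
      (forall_zero_lt_one_div_I_mul_sigmaC_iff_of_eq_graph hS hH hιΛΦ hMSt hΛSt).mp hpos⟩
  · rintro ⟨St, hSt, hΛ, hpos⟩
    exact (forall_zero_lt_one_div_I_mul_sigmaC_iff_of_eq_graph hS hH hιΛΦ hSt hΛ).mpr hpos
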